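/- Truth lemma for the canonical model of N: let L be the pure logic of necessitation N and fix a formula A. In the model whose worlds are the A-maximally L-consistent subsets X of ~Sub(A), with X ≺_B Y defined by (□B ∉ X or B ∈ Y) and X ⊩ p iff p ∈ X, for every world X and every B ∈ ~Sub(A): X ⊩ B iff B ∈ X. -/
import Mathlib


/-- Modal formulas: propositional variables, ⊥, ∧, ∨, →, □.  Negation is defined. -/
inductive Formula : Type
  | var : ℕ → Formula
  | bot : Formula
  | and : Formula → Formula → Formula
  | or : Formula → Formula → Formula
  | imp : Formula → Formula → Formula
  | box : Formula → Formula
deriving DecidableEq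

namespace Formula
/-- ¬A := A → ⊥ -/
def neg (A : Formula) : Formula := A.imp .bot
end Formula

/-- `A` is a propositional tautology (in the modal language): it is true under every
assignment of truth values that respects the propositional connectives (variables and
boxed formulas are treated as atoms). -/
def IsTautology (A : Formula) : Prop :=
  ∀ v : Formula → Prop,
    (¬ v .bot) →
    (∀ B C, v (.and B C) ↔ (v B ∧ v C)) →
    (∀ B C, v (.or B C) ↔ (v B ∨ v C)) →
    (∀ B C, v (.imp B C) ↔ (v B → v C)) →
    v A

/-- Satisfaction in an N-model `(W, {≺_B}, ⊩)` with relations `R` and valuation `V`: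
`x ⊩ □B` iff every `y` with `x ≺_B y` satisfies `B`. -/
def Sat {W : Type} (R : Formula → W → W → Prop) (V : W → ℕ → Prop) :
    W → Formula → Prop
  | w, .var n => V w n
  | _, .bot => False
  | w, .and A B => Sat R V w A ∧ Sat R V w B
  | w, .or A B => Sat R V w A ∨ Sat R V w B
  | w, .imp A B => Sat R V w A → Sat R V w B
  | w, .box A => ∀ y, R A w y → Sat R V y A

/-- The set of subformulas Sub(A). -/
def subf : Formula → Finset Formula
  | .var n => {.var n}
  | .bot => {.bot}
  | .and A B => insert (.and A B) (subf A ∪ subf B)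
  | .or A B => insert (.or A B) (subf A ∪ subf B)
  | .imp A B => insert (.imp A B) (subf A ∪ subf B)
  | .box A => insert (.box A) (subf A)

/-- The pure logic of necessitation N: all propositional tautologies, MP, Nec. -/
inductive NProv : Formula → Prop
  | taut {A} : IsTautology A → NProv A
  | mp {A B} : NProv (A.imp B) → NProv A → NProv B
  | nec {A} : NProv A → NProv A.box

/-- `~B`: `C` if `B = ¬C`, and `¬B` otherwise. -/
def simneg : Formula → Formula
  | .imp B .bot => B
  | B => B.neg

/-- `~Sub(A) = Sub(A) ∪ {~B : B ∈ Sub(A)}`. -/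
def nsub (A : Formula) : Finset Formula := subf A ∪ (subf A).image simneg

/-- A conjunction of all elements of the finite set `X` (the empty conjunction is ⊤). -/
noncomputable def conj (X : Finset Formula) : Formula :=
  X.toList.foldr Formula.and (Formula.bot.imp Formula.bot)

/-- `X` is `L`-consistent: `L` does not prove `¬⋀X`. -/
def Cons (L : Formula → Prop) (X : Finset Formula) : Prop := ¬ L (conj X).neg

/-- `X` is `A`-maximally `L`-consistent. -/
def MaxCons (L : Formula → Prop) (A : Formula) (X : Finset Formula) : Prop :=
  X ⊆ nsub A ∧ Cons L X ∧ ∀ B ∈ nsub A, B ∉ X → ¬ Cons L (insert B X)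

/-- The canonical relations: `X ≺_B Y` iff `□B ∉ X` or `B ∈ Y`. -/
def canRel (L : Formula → Prop) (A : Formula) (B : Formula)
    (X Y : {X : Finset Formula // MaxCons L A X}) : Prop :=
  B.box ∉ X.1 ∨ B ∈ Y.1

/-- The canonical valuation: `X ⊩ p` iff `p ∈ X`. -/
def canVal (L : Formula → Prop) (A : Formula)
    (X : {X : Finset Formula // MaxCons L A X}) (n : ℕ) : Prop :=
  Formula.var n ∈ X.1

/-! ### Auxiliary machinery -/

def Good (v : Formula → Prop) : Prop :=
  (¬ v .bot) ∧ (∀ B C, v (.and B C) ↔ (v B ∧ v C)) ∧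
  (∀ B C, v (.or B C) ↔ (v B ∨ v C)) ∧ (∀ B C, v (.imp B C) ↔ (v B → v C))

lemma nprov_of_good {A : Formula} (h : ∀ v, Good v → v A) : NProv A :=
  NProv.taut (fun v h1 h2 h3 h4 => h v ⟨h1, h2, h3, h4⟩)

lemma neg_val {v : Formula → Prop} (hv : Good v) (B : Formula) : v B.neg ↔ ¬ v B := by
  rw [Formula.neg, hv.2.2.2]
  exact ⟨fun h hb => hv.1 (h hb), fun h hb => absurd hb h⟩

lemma conj_val {v : Formula → Prop} (hv : Good v) (X : Finset Formula) :
    v (conj X) ↔ ∀ C ∈ X, v C := by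
  unfold conj
  have key : ∀ l : List Formula,
      v (l.foldr Formula.and (Formula.bot.imp Formula.bot)) ↔ ∀ C ∈ l, v C := by
    intro l
    induction l with
    | nil => simp [hv.2.2.2]
    | cons a l ih => simp [hv.2.1, ih]
  rw [key]
  simp

lemma simneg_cases (B : Formula) :
    (∃ C, B = C.neg ∧ simneg B = C) ∨ simneg B = B.neg := by
  cases B with
  | imp C D =>
    cases D with
    | bot => exact Or.inl ⟨C, rfl, rfl⟩
    | var n => exact Or.inr rfl
    | and _ _ => exact Or.inr rfl
    | or _ _ => exact Or.inr rfl
    | imp _ _ => exact Or.inr rfl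
    | box _ => exact Or.inr rfl
  | var n => exact Or.inr rfl
  | bot => exact Or.inr rfl
  | and _ _ => exact Or.inr rfl
  | or _ _ => exact Or.inr rfl
  | box _ => exact Or.inr rfl

lemma simneg_val {v : Formula → Prop} (hv : Good v) (B : Formula) :
    v (simneg B) ↔ ¬ v B := by
  rcases simneg_cases B with ⟨C, hBC, hs⟩ | hs
  · rw [hs, hBC, neg_val hv]
    tauto
  · rw [hs, neg_val hv]

lemma mem_subf_self : ∀ A : Formula, A ∈ subf A := by
  intro A
  cases A <;> simp [subf]

lemma subf_trans {A B : Formula} (h : B ∈ subf A) : subf B ⊆ subf A := by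
  induction A with
  | var n => simp [subf] at h; subst h; exact subset_rfl
  | bot => simp [subf] at h; subst h; exact subset_rfl
  | and A1 A2 ih1 ih2 =>
    rw [subf] at h ⊢
    rcases Finset.mem_insert.mp h with h | h
    · subst h; rw [subf]
    · rcases Finset.mem_union.mp h with h | h
      · exact (ih1 h).trans (fun x hx =>
          Finset.mem_insert_of_mem (Finset.mem_union_left _ hx))
      · exact (ih2 h).trans (fun x hx =>
          Finset.mem_insert_of_mem (Finset.mem_union_right _ hx))
  | or A1 A2 ih1 ih2 =>
    rw [subf] at h ⊢
    rcases Finset.mem_insert.mp h with h | h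
    · subst h; rw [subf]
    · rcases Finset.mem_union.mp h with h | h
      · exact (ih1 h).trans (fun x hx =>
          Finset.mem_insert_of_mem (Finset.mem_union_left _ hx))
      · exact (ih2 h).trans (fun x hx =>
          Finset.mem_insert_of_mem (Finset.mem_union_right _ hx))
  | imp A1 A2 ih1 ih2 =>
    rw [subf] at h ⊢
    rcases Finset.mem_insert.mp h with h | h
    · subst h; rw [subf]
    · rcases Finset.mem_union.mp h with h | h
      · exact (ih1 h).trans (fun x hx =>
          Finset.mem_insert_of_mem (Finset.mem_union_left _ hx))
      · exact (ih2 h).trans (fun x hx =>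
          Finset.mem_insert_of_mem (Finset.mem_union_right _ hx))
  | box A1 ih1 =>
    rw [subf] at h ⊢
    rcases Finset.mem_insert.mp h with h | h
    · subst h; rw [subf]
    · exact (ih1 h).trans (Finset.subset_insert _ _)

lemma subf_subset_nsub {A B : Formula} (h : B ∈ subf A) : B ∈ nsub A :=
  Finset.mem_union_left _ h

lemma simneg_mem_nsub {A B : Formula} (h : B ∈ subf A) : simneg B ∈ nsub A :=
  Finset.mem_union_right _ (Finset.mem_image_of_mem _ h)

/-- If `B ∈ nsub A` and `B` is a tautological consequence of its members,
then `B ∈ X` by maximality. -/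
lemma mem_of_tcons {A B : Formula} {X : Finset Formula} (hX : MaxCons NProv A X)
    (hB : B ∈ nsub A) (h : ∀ v, Good v → (∀ C ∈ X, v C) → v B) : B ∈ X := by
  by_contra hBX
  have h1 : NProv (conj (insert B X)).neg := not_not.mp (hX.2.2 B hB hBX)
  have ht : NProv (((conj (insert B X)).neg).imp ((conj X).neg)) := by
    apply nprov_of_good
    intro v hv
    rw [hv.2.2.2, neg_val hv, neg_val hv, conj_val hv, conj_val hv]
    intro hni hXv
    exact hni (by
      intro C hC
      rcases Finset.mem_insert.mp hC with rfl | hC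
      · exact h v hv hXv
      · exact hXv C hC)
  exact hX.2.1 (NProv.mp ht h1)

lemma incons_of_tcons_bot {X : Finset Formula} (hc : Cons NProv X)
    (h : ∀ v, Good v → (∀ C ∈ X, v C) → v Formula.bot) : False := by
  apply hc
  apply nprov_of_good
  intro v hv
  rw [neg_val hv, conj_val hv]
  intro hXv
  exact hv.1 (h v hv hXv)

lemma mem_simneg_not_mem {X : Finset Formula} {B : Formula} (hc : Cons NProv X)
    (h1 : B ∈ X) (h2 : simneg B ∈ X) : False :=
  incons_of_tcons_bot hc (fun v hv hXv =>
    absurd (hXv B h1) ((simneg_val hv B).mp (hXv _ h2)))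

lemma simneg_mem {A B : Formula} {X : Finset Formula} (hX : MaxCons NProv A X)
    (hB : B ∈ subf A) (h : B ∉ X) : simneg B ∈ X := by
  by_contra hn
  have h1 : NProv (conj (insert B X)).neg :=
    not_not.mp (hX.2.2 B (subf_subset_nsub hB) h)
  have h2 : NProv (conj (insert (simneg B) X)).neg :=
    not_not.mp (hX.2.2 _ (simneg_mem_nsub hB) hn)
  have ht : NProv (((conj (insert B X)).neg).imp
      ((((conj (insert (simneg B) X)).neg)).imp ((conj X).neg))) := by
    apply nprov_of_good
    intro v hv
    rw [hv.2.2.2, hv.2.2.2, neg_val hv, neg_val hv, neg_val hv,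
      conj_val hv, conj_val hv, conj_val hv]
    intro hn1 hn2 hXv
    by_cases hvB : v B
    · exact hn1 (by
        intro C hC
        rcases Finset.mem_insert.mp hC with rfl | hC
        · exact hvB
        · exact hXv C hC)
    · exact hn2 (by
        intro C hC
        rcases Finset.mem_insert.mp hC with rfl | hC
        · exact (simneg_val hv B).mpr hvB
        · exact hXv C hC)
  exact hX.2.1 (NProv.mp (NProv.mp ht h1) h2)

lemma lindenbaum (A : Formula) : ∀ n (X : Finset Formula), (nsub A \ X).card ≤ n →
    X ⊆ nsub A → Cons NProv X → ∃ Y, X ⊆ Y ∧ MaxCons NProv A Y := by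
  intro n
  induction n with
  | zero =>
    intro X hcard hsub hcons
    refine ⟨X, subset_rfl, hsub, hcons, ?_⟩
    intro B hB hBX
    exfalso
    have : B ∈ nsub A \ X := Finset.mem_sdiff.mpr ⟨hB, hBX⟩
    have := Finset.card_pos.mpr ⟨B, this⟩
    omega
  | succ n ih =>
    intro X hcard hsub hcons
    by_cases h : ∀ B ∈ nsub A, B ∉ X → ¬ Cons NProv (insert B X)
    · exact ⟨X, subset_rfl, hsub, hcons, h⟩
    · push_neg at h
      obtain ⟨B, hB, hBX, hc⟩ := h
      have hmem : B ∈ nsub A \ X := Finset.mem_sdiff.mpr ⟨hB, hBX⟩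
      have hcard' : (nsub A \ insert B X).card ≤ n := by
        rw [Finset.sdiff_insert]
        have := Finset.card_erase_of_mem hmem
        omega
      obtain ⟨Y, hXY, hY⟩ := ih (insert B X) hcard' (Finset.insert_subset hB hsub) hc
      exact ⟨Y, (Finset.subset_insert _ _).trans hXY, hY⟩

lemma truth (A : Formula) : ∀ B, B ∈ subf A →
    ∀ X : {X : Finset Formula // MaxCons NProv A X},
    (Sat (canRel NProv A) (canVal NProv A) X B ↔ B ∈ X.1) := by
  intro B
  induction B with
  | var n =>
    intro _ X
    simp [Sat, canVal]
  | bot =>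
    intro _ X
    simp only [Sat, false_iff]
    intro h
    exact incons_of_tcons_bot X.2.2.1 (fun v hv hXv => hXv _ h)
  | and B C ihB ihC =>
    intro hB X
    have hBs : B ∈ subf A := subf_trans hB (by
      rw [subf]; exact Finset.mem_insert_of_mem (Finset.mem_union_left _ (mem_subf_self B)))
    have hCs : C ∈ subf A := subf_trans hB (by
      rw [subf]; exact Finset.mem_insert_of_mem (Finset.mem_union_right _ (mem_subf_self C)))
    simp only [Sat, ihB hBs X, ihC hCs X]
    constructor
    · rintro ⟨h1, h2⟩
      exact mem_of_tcons X.2 (subf_subset_nsub hB)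
        (fun v hv hXv => (hv.2.1 B C).mpr ⟨hXv _ h1, hXv _ h2⟩)
    · intro h
      exact ⟨mem_of_tcons X.2 (subf_subset_nsub hBs)
          (fun v hv hXv => ((hv.2.1 B C).mp (hXv _ h)).1),
        mem_of_tcons X.2 (subf_subset_nsub hCs)
          (fun v hv hXv => ((hv.2.1 B C).mp (hXv _ h)).2)⟩
  | or B C ihB ihC =>
    intro hB X
    have hBs : B ∈ subf A := subf_trans hB (by
      rw [subf]; exact Finset.mem_insert_of_mem (Finset.mem_union_left _ (mem_subf_self B)))
    have hCs : C ∈ subf A := subf_trans hB (by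
      rw [subf]; exact Finset.mem_insert_of_mem (Finset.mem_union_right _ (mem_subf_self C)))
    simp only [Sat, ihB hBs X, ihC hCs X]
    constructor
    · rintro (h | h)
      · exact mem_of_tcons X.2 (subf_subset_nsub hB)
          (fun v hv hXv => (hv.2.2.1 B C).mpr (Or.inl (hXv _ h)))
      · exact mem_of_tcons X.2 (subf_subset_nsub hB)
          (fun v hv hXv => (hv.2.2.1 B C).mpr (Or.inr (hXv _ h)))
    · intro h
      by_contra hn
      push_neg at hn
      obtain ⟨hnB, hnC⟩ := hn
      have hsB := simneg_mem X.2 hBs hnB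
      have hsC := simneg_mem X.2 hCs hnC
      exact incons_of_tcons_bot X.2.2.1 (fun v hv hXv => by
        rcases (hv.2.2.1 B C).mp (hXv _ h) with hb | hb
        · exact absurd hb ((simneg_val hv B).mp (hXv _ hsB))
        · exact absurd hb ((simneg_val hv C).mp (hXv _ hsC)))
  | imp B C ihB ihC =>
    intro hB X
    have hBs : B ∈ subf A := subf_trans hB (by
      rw [subf]; exact Finset.mem_insert_of_mem (Finset.mem_union_left _ (mem_subf_self B)))
    have hCs : C ∈ subf A := subf_trans hB (by
      rw [subf]; exact Finset.mem_insert_of_mem (Finset.mem_union_right _ (mem_subf_self C)))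
    simp only [Sat, ihB hBs X, ihC hCs X]
    constructor
    · intro h
      by_cases hb : B ∈ X.1
      · exact mem_of_tcons X.2 (subf_subset_nsub hB)
          (fun v hv hXv => (hv.2.2.2 B C).mpr (fun _ => hXv _ (h hb)))
      · have hsB := simneg_mem X.2 hBs hb
        exact mem_of_tcons X.2 (subf_subset_nsub hB)
          (fun v hv hXv => (hv.2.2.2 B C).mpr
            (fun hvB => absurd hvB ((simneg_val hv B).mp (hXv _ hsB))))
    · intro h hb
      exact mem_of_tcons X.2 (subf_subset_nsub hCs)
        (fun v hv hXv => (hv.2.2.2 B C).mp (hXv _ h) (hXv _ hb))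
  | box B ihB =>
    intro hB X
    have hBs : B ∈ subf A := subf_trans hB (by
      rw [subf]; exact Finset.mem_insert_of_mem (mem_subf_self B))
    simp only [Sat]
    constructor
    · intro h
      by_contra hbox
      have hall : ∀ Y : {X : Finset Formula // MaxCons NProv A X}, B ∈ Y.1 := by
        intro Y
        have := h Y (Or.inl hbox)
        rwa [ihB hBs Y] at this
      by_cases hp : NProv B
      · have h1 : NProv (conj (insert B.box X.1)).neg :=
          not_not.mp (X.2.2.2 _ (subf_subset_nsub hB) hbox)
        have ht : NProv (B.box.imp (((conj (insert B.box X.1)).neg).imp ((conj X.1).neg))) := by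
          apply nprov_of_good
          intro v hv
          rw [hv.2.2.2, hv.2.2.2, neg_val hv, neg_val hv, conj_val hv, conj_val hv]
          intro hvb hni hXv
          exact hni (by
            intro C hC
            rcases Finset.mem_insert.mp hC with rfl | hC
            · exact hvb
            · exact hXv C hC)
        exact X.2.2.1 (NProv.mp (NProv.mp ht (NProv.nec hp)) h1)
      · have hc : Cons NProv ({simneg B} : Finset Formula) := by
          intro hn
          apply hp
          have ht : NProv ((conj ({simneg B} : Finset Formula)).neg.imp B) := by
            apply nprov_of_good
            intro v hv
            rw [hv.2.2.2, neg_val hv, conj_val hv]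
            intro hni
            by_contra hvB
            apply hni
            intro C hC
            rw [Finset.mem_singleton] at hC
            subst hC
            exact (simneg_val hv B).mpr hvB
          exact NProv.mp ht hn
        obtain ⟨Y, hsub, hY⟩ := lindenbaum A _ _ le_rfl
          (Finset.singleton_subset_iff.mpr (simneg_mem_nsub hBs)) hc
        exact mem_simneg_not_mem hY.2.1 (hall ⟨Y, hY⟩)
          (hsub (Finset.mem_singleton_self _))
    · intro h Y hR
      rw [ihB hBs Y]
      rcases hR with h1 | h1
      · exact absurd h h1
      · exact h1

/-- Truth lemma for the canonical model of N: for every world `X` and every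
`B ∈ ~Sub(A)`, `X ⊩ B` iff `B ∈ X`. -/
theorem stmt8 (A : Formula) (X : {X : Finset Formula // MaxCons NProv A X})
    (B : Formula) (hB : B ∈ nsub A) :
    Sat (canRel NProv A) (canVal NProv A) X B ↔ B ∈ X.1 := by
  rcases Finset.mem_union.mp hB with h | h
  · exact truth A B h X
  · obtain ⟨C, hC, rfl⟩ := Finset.mem_image.mp h
    rcases simneg_cases C with ⟨D, hD, hs⟩ | hs
    · rw [hs]
      have hD' : D ∈ subf A := by
        apply subf_trans hC
        subst hD
        rw [Formula.neg, subf]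
        exact Finset.mem_insert_of_mem (Finset.mem_union_left _ (mem_subf_self D))
      exact truth A D hD' X
    · rw [hs]
      have hCt := truth A C hC X
      constructor
      · intro hsat
        have hnC : C ∉ X.1 := by
          intro hc
          exact (show Sat (canRel NProv A) (canVal NProv A) X C.neg from hsat) (hCt.mpr hc)
        have := simneg_mem X.2 hC hnC
        rwa [hs] at this
      · intro hmem hsatC
        exact mem_simneg_not_mem X.2.2.1 (hCt.mp hsatC) (hs ▸ hmem)
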